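/- arXiv:2410.19679 — 2 statements merged into one kernel-verified Lean document; each statement's English description precedes it below -/
import Mathlib

section
/- Let T be a bounded linear operator on a complex Hilbert space H and N a norm on B(H). If dw_N(T) = N(|T|)², then Re(T) = 0, i.e., T is anti-hermitian (T = -T*). -/
open ContinuousLinearMap Complex

variable {H : Type*} [NormedAddCommGroup H] [InnerProductSpace ℂ H] [CompleteSpace H]

/-- Real part of an operator: `Re(A) = (A + A*)/2`. -/
noncomputable def reOp (A : H →L[ℂ] H) : H →L[ℂ] H := (2 : ℂ)⁻¹ • (A + adjoint A)

/-- Imaginary part of an operator: `Im(A) = (A - A*)/(2i)`. -/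
noncomputable def imOp (A : H →L[ℂ] H) : H →L[ℂ] H := (2 * I)⁻¹ • (A - adjoint A)

/-- Modulus of an operator: `|A| = (A* A)^{1/2}`. -/
noncomputable def absOp (A : H →L[ℂ] H) : H →L[ℂ] H := CFC.sqrt (adjoint A * A)

/-- Generalized numerical radius. -/
noncomputable def wN (N : (H →L[ℂ] H) → ℝ) (T : H →L[ℂ] H) : ℝ :=
  ⨆ θ : ℝ, N (reOp (Complex.exp (θ * I) • T))

/-- Generalized Davis–Wielandt radius. -/
noncomputable def dwN (N : (H →L[ℂ] H) → ℝ) (T : H →L[ℂ] H) : ℝ :=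
  ⨆ θ : ℝ, Real.sqrt ((N (reOp (Complex.exp (θ * I) • T))) ^ 2
    + (N (reOp (Complex.exp (θ * I) • absOp T))) ^ 4)

/-!
Evaluating the supremum defining `dwN N T` at `θ = 0` gives
`√(N(Re T)² + N(|T|)⁴) ≤ dwN N T = N(|T|)²`, since `Re |T| = |T|`; hence `N(Re T) = 0`.
If the supremum is unbounded, Lean's `⨆` is `0`, which forces `N(|T|) = 0`, so `T = 0`.
-/

lemma Real.le_iSup_or_iSup_eq_zero {ι : Sort*} (f : ι → ℝ) (i : ι) :
    f i ≤ ⨆ j, f j ∨ ⨆ j, f j = 0 := by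
  by_cases hf : BddAbove (Set.range f)
  · exact .inl (le_ciSup hf i)
  · exact .inr (Real.iSup_of_not_bddAbove hf)

lemma reOp_of_isSelfAdjoint {A : H →L[ℂ] H} (hA : IsSelfAdjoint A) : reOp A = A := by
  rw [reOp, ← star_eq_adjoint, hA.star_eq, ← two_smul ℂ A, smul_smul]
  norm_num

lemma eq_neg_adjoint_of_reOp_eq_zero {A : H →L[ℂ] H} (hA : reOp A = 0) : A = -adjoint A := by
  rw [reOp, smul_eq_zero] at hA
  exact eq_neg_of_add_eq_zero_left (hA.resolve_left (by norm_num))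

lemma isSelfAdjoint_absOp (A : H →L[ℂ] H) : IsSelfAdjoint (absOp A) :=
  IsSelfAdjoint.of_nonneg (CFC.sqrt_nonneg _)

lemma eq_zero_of_absOp_eq_zero {A : H →L[ℂ] H} (hA : absOp A = 0) : A = 0 := by
  rw [absOp, ← star_eq_adjoint, CFC.sqrt_eq_zero_iff _ (star_mul_self_nonneg A)] at hA
  exact (CStarRing.star_mul_self_eq_zero_iff A).mp hA

lemma sqrt_le_dwN_or_dwN_eq_zero (N : (H →L[ℂ] H) → ℝ) (T : H →L[ℂ] H) :
    Real.sqrt (N (reOp T) ^ 2 + N (absOp T) ^ 4) ≤ dwN N T ∨ dwN N T = 0 := by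
  have hθ := Real.le_iSup_or_iSup_eq_zero (fun θ : ℝ ↦ Real.sqrt
    (N (reOp (Complex.exp (θ * I) • T)) ^ 2 + N (reOp (Complex.exp (θ * I) • absOp T)) ^ 4)) 0
  simpa only [ofReal_zero, zero_mul, Complex.exp_zero, one_smul,
    reOp_of_isSelfAdjoint (isSelfAdjoint_absOp T), dwN] using hθ

theorem stmt_1_general (N : (H →L[ℂ] H) → ℝ) (T : H →L[ℂ] H)
    (hNeq : ∀ A : H →L[ℂ] H, N A = 0 → A = 0) :
    dwN N T = (N (absOp T)) ^ 2 → T = -adjoint T := by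
  intro hdw
  rcases sqrt_le_dwN_or_dwN_eq_zero N T with hle | hzero
  · rw [hdw, Real.sqrt_le_iff] at hle
    have hre : N (reOp T) = 0 := by nlinarith [hle.2]
    exact eq_neg_adjoint_of_reOp_eq_zero (hNeq _ hre)
  · rw [hzero, eq_comm, pow_eq_zero_iff two_ne_zero] at hdw
    simp [eq_zero_of_absOp_eq_zero (hNeq _ hdw)]

theorem stmt_1 (N : (H →L[ℂ] H) → ℝ) (T : H →L[ℂ] H)
    (hN0 : ∀ A : H →L[ℂ] H, 0 ≤ N A)
    (hNeq : ∀ A : H →L[ℂ] H, N A = 0 → A = 0)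
    (hNadd : ∀ A B : H →L[ℂ] H, N (A + B) ≤ N A + N B)
    (hNsmul : ∀ (c : ℂ) (A : H →L[ℂ] H), N (c • A) = ‖c‖ * N A) :
    dwN N T = (N (absOp T)) ^ 2 → T = -adjoint T :=
  stmt_1_general N T hNeq
end

section
/- Let T be a bounded linear operator on a complex Hilbert space H and N a submultiplicative (algebra) norm on B(H). Then dw_N(T) ≥ (1/2) sqrt( N(T² + 2|T|⁴) ). -/
open ContinuousLinearMap Complex

variable {H : Type*} [NormedAddCommGroup H] [InnerProductSpace ℂ H] [CompleteSpace H]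

/-!
Write `T = A + iB` with `A = Re T`, `B = Im T` and put `C = |T|`, `a = N A`, `b = N B`, `c = N C`.
Since `|T|` is selfadjoint, `Re(e^{iθ}|T|) = cos θ · |T|`, so the angles `θ = 0` and `θ = π/2`
in the definition of `dw_N(T)` give `a² + c⁴ ≤ dw_N(T)²` and `b² ≤ dw_N(T)²`. Submultiplicativity
gives `N(T²) ≤ N(T)² ≤ (a + b)² ≤ 2a² + 2b²` and `N(|T|⁴) ≤ c⁴`, hence
`N(T² + 2|T|⁴) ≤ 2(a² + c⁴) + 2b² ≤ 4 dw_N(T)²`.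
-/

def Seminorm.toRingSeminorm {𝕜 R : Type*} [NormedField 𝕜] [Ring R] [Module 𝕜 R]
    (p : Seminorm 𝕜 R) (hmul : ∀ x y, p (x * y) ≤ p x * p y) : RingSeminorm R where
  toFun := p
  map_zero' := map_zero p
  add_le' := map_add_le_add p
  neg' := map_neg_eq_map p
  mul_le' := hmul

lemma reOp_add_I_smul_imOp (T : H →L[ℂ] H) : reOp T + I • imOp T = T := by
  unfold reOp imOp
  rw [smul_smul, show I * ((2 : ℂ) * I)⁻¹ = 2⁻¹ by field_simp]
  module

lemma reOp_exp_mul_I_smul (θ : ℝ) (S : H →L[ℂ] H) :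
    reOp (exp (θ * I) • S) = (Real.cos θ : ℂ) • reOp S - (Real.sin θ : ℂ) • imOp S := by
  have hI : ((2 : ℂ) * I)⁻¹ = -(I / 2) := by rw [mul_inv, inv_I]; ring
  unfold reOp imOp
  rw [← star_eq_adjoint, ← star_eq_adjoint, star_smul, star_eq_adjoint, hI]
  simp only [exp_mul_I, ← ofReal_cos, ← ofReal_sin, star_def, map_add, map_mul, conj_I,
    conj_ofReal]
  match_scalars <;> ring

lemma adjoint_absOp (T : H →L[ℂ] H) : adjoint (absOp T) = absOp T := by
  rw [← star_eq_adjoint, (IsSelfAdjoint.of_nonneg (CFC.sqrt_nonneg _)).star_eq]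

lemma reOp_absOp (T : H →L[ℂ] H) : reOp (absOp T) = absOp T := by
  unfold reOp
  rw [adjoint_absOp, ← two_smul ℂ, smul_smul, inv_mul_cancel₀ two_ne_zero, one_smul]

lemma imOp_absOp (T : H →L[ℂ] H) : imOp (absOp T) = 0 := by
  simp [imOp, adjoint_absOp]

section DavisWielandt

variable (p : Seminorm ℂ (H →L[ℂ] H))

lemma seminorm_reOp_exp_mul_I_smul_le (θ : ℝ) (S : H →L[ℂ] H) :
    p (reOp (exp (θ * I) • S)) ≤ p (reOp S) + p (imOp S) := by
  rw [reOp_exp_mul_I_smul]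
  grw [map_sub_le_add, map_smul_eq_mul, map_smul_eq_mul, norm_real, norm_real,
    Real.norm_eq_abs, Real.norm_eq_abs, Real.abs_cos_le_one, Real.abs_sin_le_one, one_mul, one_mul]

lemma le_dwN (T : H →L[ℂ] H) (θ : ℝ) :
    Real.sqrt (p (reOp (exp (θ * I) • T)) ^ 2 + p (reOp (exp (θ * I) • absOp T)) ^ 4)
      ≤ dwN p T := by
  refine le_ciSup (f := fun θ : ℝ ↦ Real.sqrt (p (reOp (exp (θ * I) • T)) ^ 2
    + p (reOp (exp (θ * I) • absOp T)) ^ 4)) ⟨Real.sqrt ((p (reOp T) + p (imOp T)) ^ 2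
      + (p (reOp (absOp T)) + p (imOp (absOp T))) ^ 4), ?_⟩ θ
  rintro _ ⟨φ, rfl⟩
  dsimp only
  gcongr <;> exact seminorm_reOp_exp_mul_I_smul_le p φ _

lemma sq_reOp_add_pow_four_absOp_le_sq_dwN (T : H →L[ℂ] H) :
    p (reOp T) ^ 2 + p (absOp T) ^ 4 ≤ dwN p T ^ 2 := by
  have h := le_dwN p T 0
  rw [ofReal_zero, zero_mul, exp_zero, one_smul, one_smul, reOp_absOp] at h
  exact (Real.sqrt_le_iff.mp h).2

lemma imOp_le_dwN (T : H →L[ℂ] H) : p (imOp T) ≤ dwN p T := by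
  have h := le_dwN p T (Real.pi / 2)
  rw [reOp_exp_mul_I_smul, reOp_exp_mul_I_smul, imOp_absOp, Real.cos_pi_div_two,
    Real.sin_pi_div_two] at h
  simpa using h

lemma seminorm_sq_add_two_smul_absOp_pow_four_le
    (hmul : ∀ A B, p (A * B) ≤ p A * p B) (T : H →L[ℂ] H) :
    p (T ^ 2 + 2 • absOp T ^ 4) ≤ 4 * dwN p T ^ 2 := by
  set a := p (reOp T)
  set b := p (imOp T)
  have hT : p T ≤ a + b := by
    conv_lhs => rw [← reOp_add_I_smul_imOp T]
    grw [map_add_le_add, map_smul_eq_mul, norm_I, one_mul]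
  have hpow (A : H →L[ℂ] H) {n : ℕ} (hn : n ≠ 0) : p (A ^ n) ≤ p A ^ n :=
    map_pow_le_pow (p.toRingSeminorm hmul) A hn
  have hRe := sq_reOp_add_pow_four_absOp_le_sq_dwN p T
  have hIm := imOp_le_dwN p T
  calc p (T ^ 2 + 2 • absOp T ^ 4) ≤ p (T ^ 2) + 2 * p (absOp T ^ 4) := by
        grw [map_add_le_add, two_smul, map_add_le_add, two_mul]
    _ ≤ (a + b) ^ 2 + 2 * p (absOp T) ^ 4 := by
        grw [hpow T two_ne_zero, hpow (absOp T) four_ne_zero, hT]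
    _ ≤ 4 * dwN p T ^ 2 := by
        nlinarith [sq_nonneg (a - b), apply_nonneg p (imOp T)]

end DavisWielandt

theorem stmt_4_general (N : (H →L[ℂ] H) → ℝ) (T : H →L[ℂ] H)
    (hNadd : ∀ A B : H →L[ℂ] H, N (A + B) ≤ N A + N B)
    (hNsmul : ∀ (c : ℂ) (A : H →L[ℂ] H), N (c • A) = ‖c‖ * N A)
    (hNmul : ∀ A B : H →L[ℂ] H, N (A * B) ≤ N A * N B) :
    dwN N T ≥ (1 / 2) * Real.sqrt (N (T ^ 2 + 2 • absOp T ^ 4)) := by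
  let p : Seminorm ℂ (H →L[ℂ] H) := Seminorm.of N hNadd hNsmul
  have hdw : 0 ≤ dwN N T := (apply_nonneg p (imOp T)).trans (imOp_le_dwN p T)
  have hN : N (T ^ 2 + 2 • absOp T ^ 4) ≤ 4 * dwN N T ^ 2 :=
    seminorm_sq_add_two_smul_absOp_pow_four_le p hNmul T
  have hsqrt : Real.sqrt (N (T ^ 2 + 2 • absOp T ^ 4)) ≤ 2 * dwN N T := by
    rw [Real.sqrt_le_left (by positivity)]
    linarith
  linarith

theorem stmt_4 (N : (H →L[ℂ] H) → ℝ) (T : H →L[ℂ] H)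
    (hN0 : ∀ A : H →L[ℂ] H, 0 ≤ N A)
    (hNeq : ∀ A : H →L[ℂ] H, N A = 0 → A = 0)
    (hNadd : ∀ A B : H →L[ℂ] H, N (A + B) ≤ N A + N B)
    (hNsmul : ∀ (c : ℂ) (A : H →L[ℂ] H), N (c • A) = ‖c‖ * N A)
    (hNmul : ∀ A B : H →L[ℂ] H, N (A * B) ≤ N A * N B) :
    dwN N T ≥ (1 / 2) * Real.sqrt (N (T ^ 2 + 2 • absOp T ^ 4)) :=
  stmt_4_general N T hNadd hNsmul hNmul
end
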